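/- Let X be a locally compact subset of the positive cone [0,∞)^N of ℝ^N, equipped with a positive Borel measure μ, and let E be a vector sublattice of the real-valued functions on X containing the restrictions to X of the reduced family of test functions 1, −pr_1, …, −pr_N and Σ_{k=1}^N pr_k². Let (T_n) be a sequence of weakly nonlinear (sublinear and translatable) and monotone operators from E into E such that for each of these N+2 test functions h one has T_n(h)(x) → h(x) for μ-almost every x ∈ X. Then for every f ∈ E that is bounded and whose set of points of discontinuity is μ-null, one has T_n(f)(x) → f(x) for μ-almost every x ∈ X. -/

import Mathlib

/-!
Fix a point `x` of continuity of `f` at which the test functions converge. For `ε > 0` and `λ`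
large (depending on the bound of `f`), `|f - f x| ≤ ε + λ ∑ₖ (prₖ - xₖ)²`, and this majorant is
`(ε + λ ∑ₖ xₖ²) • 1 + λ • ∑ₖ prₖ² + ∑ₖ (2 λ xₖ) • (-prₖ)`, a combination of the test functions
whose coefficients are nonnegative because `x` lies in the positive cone. Sublinearity then gives
`limsup Tₙ(g)(x) ≤ g(x) = ε`, and monotonicity and translatability give
`|Tₙ(f)(x) - f(x)| ≤ |f(x)| |Tₙ(1)(x) - 1| + Tₙ(g)(x)`.
-/

open MeasureTheory Filter Topology Set

section Operators

variable {X : Type*}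

structure IsMonotoneWeaklyNonlinear (E : Submodule ℝ (X → ℝ)) (T : (X → ℝ) → X → ℝ) :
    Prop where
  map_add_le : ∀ f ∈ E, ∀ g ∈ E, T (f + g) ≤ T f + T g
  map_smul_of_nonneg : ∀ α : ℝ, 0 ≤ α → ∀ f ∈ E, T (α • f) = α • T f
  map_le_map : ∀ f ∈ E, ∀ g ∈ E, f ≤ g → T f ≤ T g
  map_add_smul_one : ∀ f ∈ E, ∀ α : ℝ, 0 ≤ α → T (f + α • 1) = T f + α • T 1

namespace IsMonotoneWeaklyNonlinear

variable {E : Submodule ℝ (X → ℝ)} {T : (X → ℝ) → X → ℝ}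

theorem map_zero (hT : IsMonotoneWeaklyNonlinear E T) : T 0 = 0 := by
  simpa using hT.map_smul_of_nonneg 0 le_rfl 0 E.zero_mem

/-- Translatability upgrades positive homogeneity on constants to full homogeneity. -/
theorem map_smul_one (hT : IsMonotoneWeaklyNonlinear E T) (h1 : (1 : X → ℝ) ∈ E) (c : ℝ) :
    T (c • 1) = c • T 1 := by
  rcases le_or_gt 0 c with hc | hc
  · exact hT.map_smul_of_nonneg c hc 1 h1
  · have h := hT.map_add_smul_one (c • 1) (E.smul_mem c h1) (-c) (by linarith)
    rw [← add_smul, add_neg_cancel, zero_smul, hT.map_zero, neg_smul, eq_comm,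
      ← sub_eq_add_neg, sub_eq_zero] at h
    exact h

theorem abs_apply_sub_le (hT : IsMonotoneWeaklyNonlinear E T) (h1 : (1 : X → ℝ) ∈ E)
    {f g : X → ℝ} (hf : f ∈ E) (hg : g ∈ E) {x : X} (hfg : ∀ y, |f y - f x| ≤ g y) :
    |T f x - f x| ≤ |f x| * |T 1 x - 1| + T g x := by
  have hc : f x • (1 : X → ℝ) ∈ E := E.smul_mem _ h1
  have hTc : T (f x • 1) x = f x * T 1 x := congrFun (hT.map_smul_one h1 (f x)) x
  have upper : T f x ≤ T g x + f x * T 1 x := by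
    have hle : f - f x • 1 ≤ g := fun y => by
      simp only [Pi.sub_apply, Pi.smul_apply, Pi.one_apply, smul_eq_mul, mul_one]
      linarith [le_abs_self (f y - f x), hfg y]
    calc T f x = T ((f - f x • 1) + f x • 1) x := by rw [sub_add_cancel]
      _ ≤ T (f - f x • 1) x + T (f x • 1) x :=
        hT.map_add_le _ (E.sub_mem hf hc) _ hc x
      _ ≤ T g x + f x * T 1 x := by
        rw [hTc]; gcongr; exact hT.map_le_map _ (E.sub_mem hf hc) _ hg hle x
  have lower : f x * T 1 x ≤ T f x + T g x := by
    have hle : f x • 1 - f ≤ g := fun y => by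
      simp only [Pi.sub_apply, Pi.smul_apply, Pi.one_apply, smul_eq_mul, mul_one]
      linarith [neg_le_abs (f y - f x), hfg y]
    calc f x * T 1 x = T (f + (f x • 1 - f)) x := by rw [add_sub_cancel, hTc]
      _ ≤ T f x + T (f x • 1 - f) x := hT.map_add_le _ hf _ (E.sub_mem hc hf) x
      _ ≤ T f x + T g x := by gcongr; exact hT.map_le_map _ (E.sub_mem hc hf) _ hg hle x
  have habs : |f x * (T 1 x - 1)| = |f x| * |T 1 x - 1| := abs_mul _ _
  rw [abs_sub_le_iff]
  constructor <;>
    linarith [le_abs_self (f x * (T 1 x - 1)), neg_abs_le (f x * (T 1 x - 1))]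

end IsMonotoneWeaklyNonlinear

/-- `limsup Tₙ(g)(x) ≤ g(x)`, phrased without `limsup` to avoid its junk values. -/
def LimsupLeAt (T : ℕ → (X → ℝ) → X → ℝ) (x : X) (g : X → ℝ) : Prop :=
  ∃ u : ℕ → ℝ, Tendsto u atTop (𝓝 (g x)) ∧ ∀ n, T n g x ≤ u n

namespace LimsupLeAt

variable {E : Submodule ℝ (X → ℝ)} {T : ℕ → (X → ℝ) → X → ℝ} {x : X} {g h : X → ℝ}

theorem of_tendsto (hg : Tendsto (fun n => T n g x) atTop (𝓝 (g x))) : LimsupLeAt T x g :=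
  ⟨_, hg, fun _ => le_rfl⟩

theorem eventually_lt (hg : LimsupLeAt T x g) {c : ℝ} (hc : g x < c) :
    ∀ᶠ n in atTop, T n g x < c := by
  obtain ⟨u, hu, hTu⟩ := hg
  filter_upwards [hu.eventually_lt_const hc] with n hn using (hTu n).trans_lt hn

theorem zero (hT : ∀ n, IsMonotoneWeaklyNonlinear E (T n)) : LimsupLeAt T x 0 :=
  ⟨0, tendsto_const_nhds, fun n => by rw [(hT n).map_zero]; rfl⟩

theorem add (hT : ∀ n, IsMonotoneWeaklyNonlinear E (T n)) (hgE : g ∈ E) (hhE : h ∈ E)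
    (hg : LimsupLeAt T x g) (hh : LimsupLeAt T x h) : LimsupLeAt T x (g + h) := by
  obtain ⟨u, hu, hTu⟩ := hg
  obtain ⟨v, hv, hTv⟩ := hh
  exact ⟨u + v, hu.add hv, fun n =>
    ((hT n).map_add_le g hgE h hhE x).trans (add_le_add (hTu n) (hTv n))⟩

theorem smul (hT : ∀ n, IsMonotoneWeaklyNonlinear E (T n)) (hgE : g ∈ E) {c : ℝ}
    (hc : 0 ≤ c) (hg : LimsupLeAt T x g) : LimsupLeAt T x (c • g) := by
  obtain ⟨u, hu, hTu⟩ := hg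
  refine ⟨c • u, hu.const_smul c, fun n => ?_⟩
  rw [(hT n).map_smul_of_nonneg c hc g hgE]
  exact mul_le_mul_of_nonneg_left (hTu n) hc

theorem sum (hT : ∀ n, IsMonotoneWeaklyNonlinear E (T n)) {ι : Type*} (s : Finset ι)
    {c : ι → ℝ} {h : ι → X → ℝ} (hc : ∀ i ∈ s, 0 ≤ c i) (hE : ∀ i ∈ s, h i ∈ E)
    (hh : ∀ i ∈ s, LimsupLeAt T x (h i)) : LimsupLeAt T x (∑ i ∈ s, c i • h i) := by
  classical
  induction s using Finset.induction_on with
  | empty => simpa using zero hT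
  | insert i s hi ih =>
    simp only [Finset.mem_insert, forall_eq_or_imp] at hc hE hh
    rw [Finset.sum_insert hi]
    exact add hT (E.smul_mem _ hE.1)
      (E.sum_mem fun j hj => E.smul_mem _ (hE.2 j hj)) (smul hT hE.1 hc.1 hh.1)
      (ih hc.2 hE.2 hh.2)

end LimsupLeAt

theorem tendsto_apply_of_forall_limsupLeAt {E : Submodule ℝ (X → ℝ)}
    {T : ℕ → (X → ℝ) → X → ℝ} (hT : ∀ n, IsMonotoneWeaklyNonlinear E (T n))
    (h1 : (1 : X → ℝ) ∈ E) {f : X → ℝ} (hf : f ∈ E) {x : X}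
    (hT1 : Tendsto (fun n => T n 1 x) atTop (𝓝 1))
    (hmaj : ∀ ε > 0, ∃ g ∈ E, (∀ y, |f y - f x| ≤ g y) ∧ g x ≤ ε ∧ LimsupLeAt T x g) :
    Tendsto (fun n => T n f x) atTop (𝓝 (f x)) := by
  rw [Metric.tendsto_nhds]
  intro ε hε
  obtain ⟨g, hgE, hfg, hgx, hg⟩ := hmaj (ε / 3) (by positivity)
  have hdefect : Tendsto (fun n => |f x| * |T n 1 x - 1|) atTop (𝓝 0) := by
    simpa using ((hT1.sub_const 1).abs.const_mul |f x|)
  filter_upwards [hdefect.eventually_lt_const (by positivity : (0 : ℝ) < ε / 3),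
    hg.eventually_lt (by linarith : g x < 2 * ε / 3)] with n hn hgn
  rw [Real.dist_eq]
  linarith [(hT n).abs_apply_sub_le h1 hf hgE hfg]

end Operators

/-- `λ = 2M/δ²` pays for the oscillation `≤ 2M` of `f` outside the `δ`-ball of continuity. -/
theorem exists_abs_sub_le_add_mul_dist_sq {α : Type*} [PseudoMetricSpace α] {f : α → ℝ}
    {x : α} (hfx : ContinuousAt f x) {M : ℝ} (hM : ∀ y, |f y| ≤ M) {ε : ℝ} (hε : 0 < ε) :
    ∃ lam, 0 ≤ lam ∧ ∀ y, |f y - f x| ≤ ε + lam * dist y x ^ 2 := by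
  obtain ⟨δ, hδ, hfδ⟩ := Metric.continuousAt_iff.mp hfx ε hε
  have hM0 : 0 ≤ M := (abs_nonneg _).trans (hM x)
  refine ⟨2 * M / δ ^ 2, by positivity, fun y => ?_⟩
  have hlam : 0 ≤ 2 * M / δ ^ 2 * dist y x ^ 2 := by positivity
  rcases lt_or_ge (dist y x) δ with hy | hy
  · have := hfδ hy
    rw [Real.dist_eq] at this
    linarith
  · have hfar : 2 * M ≤ 2 * M / δ ^ 2 * dist y x ^ 2 := by
      rw [div_mul_eq_mul_div, le_div_iff₀ (by positivity)]
      gcongr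
    linarith [abs_sub (f y) (f x), hM y, hM x]

theorem dist_sq_le_sum_sq {ι : Type*} [Fintype ι] (y x : ι → ℝ) :
    dist y x ^ 2 ≤ ∑ k, (y k - x k) ^ 2 := by
  have hcoord : ∀ k, dist (y k) (x k) ≤ √(∑ k, (y k - x k) ^ 2) := fun k =>
    Real.abs_le_sqrt (Finset.single_le_sum (f := fun j => (y j - x j) ^ 2)
      (fun _ _ => sq_nonneg _) (Finset.mem_univ k))
  calc dist y x ^ 2 ≤ √(∑ k, (y k - x k) ^ 2) ^ 2 := by
        gcongr; exact (dist_pi_le_iff (Real.sqrt_nonneg _)).mpr hcoord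
    _ = ∑ k, (y k - x k) ^ 2 := Real.sq_sqrt (Finset.sum_nonneg fun _ _ => sq_nonneg _)

section Cone

variable {N : ℕ} {X : Set (Fin N → ℝ)}

def quadraticMajorant (x : X) (ε lam : ℝ) : X → ℝ :=
  (ε + lam * ∑ k, (x : Fin N → ℝ) k ^ 2) • 1 + lam • (fun y : X => ∑ k, (y : Fin N → ℝ) k ^ 2)
    + ∑ k, (2 * lam * (x : Fin N → ℝ) k) • fun y : X => -(y : Fin N → ℝ) k

theorem quadraticMajorant_apply (x y : X) (ε lam : ℝ) :
    quadraticMajorant x ε lam y = ε + lam * ∑ k, ((y : Fin N → ℝ) k - (x : Fin N → ℝ) k) ^ 2 := by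
  simp only [quadraticMajorant, Pi.add_apply, Pi.smul_apply, Finset.sum_apply, Pi.one_apply,
    smul_eq_mul, Finset.mul_sum]
  rw [mul_one, add_assoc, add_assoc, ← Finset.sum_add_distrib, ← Finset.sum_add_distrib]
  congr 1
  exact Finset.sum_congr rfl fun k _ => by ring

variable {E : Submodule ℝ (X → ℝ)}

theorem quadraticMajorant_mem (h1 : (1 : X → ℝ) ∈ E)
    (hpr : ∀ k, (fun y : X => -(y : Fin N → ℝ) k) ∈ E)
    (hsq : (fun y : X => ∑ k, (y : Fin N → ℝ) k ^ 2) ∈ E) (x : X) (ε lam : ℝ) :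
    quadraticMajorant x ε lam ∈ E :=
  E.add_mem (E.add_mem (E.smul_mem _ h1) (E.smul_mem _ hsq))
    (E.sum_mem fun k _ => E.smul_mem _ (hpr k))

theorem limsupLeAt_quadraticMajorant (h1 : (1 : X → ℝ) ∈ E)
    (hpr : ∀ k, (fun y : X => -(y : Fin N → ℝ) k) ∈ E)
    (hsq : (fun y : X => ∑ k, (y : Fin N → ℝ) k ^ 2) ∈ E) {T : ℕ → (X → ℝ) → X → ℝ}
    (hT : ∀ n, IsMonotoneWeaklyNonlinear E (T n)) {x : X} (hx : ∀ k, 0 ≤ (x : Fin N → ℝ) k)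
    (hT1 : Tendsto (fun n => T n 1 x) atTop (𝓝 1))
    (hTpr : ∀ k, Tendsto (fun n => T n (fun y : X => -(y : Fin N → ℝ) k) x) atTop
      (𝓝 (-(x : Fin N → ℝ) k)))
    (hTsq : Tendsto (fun n => T n (fun y : X => ∑ k, (y : Fin N → ℝ) k ^ 2) x) atTop
      (𝓝 (∑ k, (x : Fin N → ℝ) k ^ 2)))
    {ε lam : ℝ} (hε : 0 ≤ ε) (hlam : 0 ≤ lam) :
    LimsupLeAt T x (quadraticMajorant x ε lam) :=
  .add hT (E.add_mem (E.smul_mem _ h1) (E.smul_mem _ hsq))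
    (E.sum_mem fun k _ => E.smul_mem _ (hpr k))
    (.add hT (E.smul_mem _ h1) (E.smul_mem _ hsq)
      (.smul hT h1 (by positivity) (.of_tendsto hT1))
      (.smul hT hsq hlam (.of_tendsto hTsq)))
    (.sum hT _ (fun k _ => by have := hx k; positivity) (fun k _ => hpr k)
      fun k _ => .of_tendsto (hTpr k))

end Cone

theorem korovkin_ae_positiveCone_general {N : ℕ} (X : Set (Fin N → ℝ))
    (hXpos : ∀ x ∈ X, ∀ k, 0 ≤ x k)
    (μ : Measure X)
    (E : Set (X → ℝ))
    -- `E` is a vector sublattice of `𝓕(X)`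
    (hEadd : ∀ f ∈ E, ∀ g ∈ E, f + g ∈ E)
    (hEsmul : ∀ (c : ℝ), ∀ f ∈ E, c • f ∈ E)
    -- `E` contains the test functions
    (hone : (fun _ : X => (1 : ℝ)) ∈ E)
    (hprneg : ∀ k : Fin N, (fun x : X => -((x : Fin N → ℝ) k)) ∈ E)
    (hsq : (fun x : X => ∑ k, ((x : Fin N → ℝ) k) ^ 2) ∈ E)
    -- `(T n)` is a sequence of sublinear and monotone operators from `E` into `E`
    (T : ℕ → (X → ℝ) → (X → ℝ))
    (hsubadd : ∀ n, ∀ f ∈ E, ∀ g ∈ E, T n (f + g) ≤ T n f + T n g)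
    (hhom : ∀ n, ∀ (α : ℝ), 0 ≤ α → ∀ f ∈ E, T n (α • f) = α • T n f)
    (hmono : ∀ n, ∀ f ∈ E, ∀ g ∈ E, f ≤ g → T n f ≤ T n g)
    (htrans : ∀ n, ∀ f ∈ E, ∀ (α : ℝ), 0 ≤ α →
      T n (f + α • (fun _ : X => (1 : ℝ))) = T n f + α • T n (fun _ : X => (1 : ℝ)))
    -- a.e. convergence on the test functions
    (htest1 : ∀ᵐ x ∂μ, Tendsto (fun n => T n (fun _ => 1) x) atTop (𝓝 1))
    (htestprneg : ∀ k : Fin N, ∀ᵐ x ∂μ,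
      Tendsto (fun n => T n (fun y : X => -((y : Fin N → ℝ) k)) x) atTop
        (𝓝 (-((x : Fin N → ℝ) k))))
    (htestsq : ∀ᵐ x ∂μ,
      Tendsto (fun n => T n (fun y : X => ∑ k, ((y : Fin N → ℝ) k) ^ 2) x) atTop
        (𝓝 (∑ k, ((x : Fin N → ℝ) k) ^ 2)))
    -- conclusion, for every bounded a.e. continuous `f ∈ E`
    (f : X → ℝ) (hfE : f ∈ E)
    (hfb : ∃ M : ℝ, ∀ x, |f x| ≤ M)
    (hfc : μ {x | ¬ ContinuousAt f x} = 0) :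
    ∀ᵐ x ∂μ, Tendsto (fun n => T n f x) atTop (𝓝 (f x)) := by
  let V : Submodule ℝ (X → ℝ) :=
    { carrier := E
      add_mem' := fun hf hg => hEadd _ hf _ hg
      zero_mem' := by simpa using hEsmul 0 _ hone
      smul_mem' := hEsmul }
  have hT : ∀ n, IsMonotoneWeaklyNonlinear V (T n) :=
    fun n => ⟨hsubadd n, hhom n, hmono n, htrans n⟩
  obtain ⟨M, hM⟩ := hfb
  filter_upwards [htest1, ae_all_iff.mpr htestprneg, htestsq, ae_iff.mpr hfc]
    with x hT1 hTpr hTsq hfx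
  refine tendsto_apply_of_forall_limsupLeAt hT hone hfE hT1 fun ε hε => ?_
  obtain ⟨lam, hlam, hflam⟩ := exists_abs_sub_le_add_mul_dist_sq hfx hM hε
  refine ⟨quadraticMajorant x ε lam, quadraticMajorant_mem hone hprneg hsq x ε lam, fun y => ?_,
    by simp [quadraticMajorant_apply], limsupLeAt_quadraticMajorant hone hprneg hsq hT
      (hXpos _ x.2) hT1 hTpr hTsq hε.le hlam⟩
  rw [quadraticMajorant_apply]
  exact (hflam y).trans (by gcongr; exact dist_sq_le_sum_sq _ _)

/-- **Theorem `thm_a.e.Conv`, last assertion.** Korovkin-type theorem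
for a.e. convergence with the reduced family of test functions
`1, -pr_1, …, -pr_N, Σ pr_k²`, for `X` a locally compact subset of the positive cone
of `ℝ^N`: weakly nonlinear (sublinear and translatable) monotone operators from `E`
into `E`; conclusion for every bounded a.e.-continuous member of `E`. -/
theorem korovkin_ae_positiveCone {N : ℕ} (X : Set (Fin N → ℝ)) [LocallyCompactSpace X]
    (hXpos : ∀ x ∈ X, ∀ k, 0 ≤ x k)
    (μ : Measure X)
    (E : Set (X → ℝ))
    -- `E` is a vector sublattice of `𝓕(X)`
    (hEadd : ∀ f ∈ E, ∀ g ∈ E, f + g ∈ E)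
    (hEsmul : ∀ (c : ℝ), ∀ f ∈ E, c • f ∈ E)
    (hEsup : ∀ f ∈ E, ∀ g ∈ E, f ⊔ g ∈ E)
    -- `E` contains the test functions
    (hone : (fun _ : X => (1 : ℝ)) ∈ E)
    (hprneg : ∀ k : Fin N, (fun x : X => -((x : Fin N → ℝ) k)) ∈ E)
    (hsq : (fun x : X => ∑ k, ((x : Fin N → ℝ) k) ^ 2) ∈ E)
    -- `(T n)` is a sequence of sublinear and monotone operators from `E` into `E`
    (T : ℕ → (X → ℝ) → (X → ℝ))
    (hmap : ∀ n, ∀ f ∈ E, T n f ∈ E)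
    (hsubadd : ∀ n, ∀ f ∈ E, ∀ g ∈ E, T n (f + g) ≤ T n f + T n g)
    (hhom : ∀ n, ∀ (α : ℝ), 0 ≤ α → ∀ f ∈ E, T n (α • f) = α • T n f)
    (hmono : ∀ n, ∀ f ∈ E, ∀ g ∈ E, f ≤ g → T n f ≤ T n g)
    (htrans : ∀ n, ∀ f ∈ E, ∀ (α : ℝ), 0 ≤ α →
      T n (f + α • (fun _ : X => (1 : ℝ))) = T n f + α • T n (fun _ : X => (1 : ℝ)))
    -- a.e. convergence on the test functions
    (htest1 : ∀ᵐ x ∂μ, Tendsto (fun n => T n (fun _ => 1) x) atTop (𝓝 1))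
    (htestprneg : ∀ k : Fin N, ∀ᵐ x ∂μ,
      Tendsto (fun n => T n (fun y : X => -((y : Fin N → ℝ) k)) x) atTop
        (𝓝 (-((x : Fin N → ℝ) k))))
    (htestsq : ∀ᵐ x ∂μ,
      Tendsto (fun n => T n (fun y : X => ∑ k, ((y : Fin N → ℝ) k) ^ 2) x) atTop
        (𝓝 (∑ k, ((x : Fin N → ℝ) k) ^ 2)))
    -- conclusion, for every bounded a.e. continuous `f ∈ E`
    (f : X → ℝ) (hfE : f ∈ E)
    (hfb : ∃ M : ℝ, ∀ x, |f x| ≤ M)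
    (hfc : μ {x | ¬ ContinuousAt f x} = 0) :
    ∀ᵐ x ∂μ, Tendsto (fun n => T n f x) atTop (𝓝 (f x)) :=
  korovkin_ae_positiveCone_general X hXpos μ E hEadd hEsmul hone hprneg hsq T hsubadd hhom hmono
    htrans htest1 htestprneg htestsq f hfE hfb hfc
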